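/- arXiv:1309.0381 — 6 statements merged into one kernel-verified Lean document; each statement's English description precedes it below -/
import Mathlib

section
/- For |q| < 1, the Lambert series identity holds: ∑_{j=1}^∞ q^j/(1-q^j) = ∑_{j=1}^∞ q^{j²}(1+q^j)/(1-q^j). -/
/-!
Both sides equal `∑_{m,n ≥ 1} q^{mn}`. Summing over `n` for fixed `m` gives the left side.
Grouping the pairs instead by `j = min m n`, the pairs `(j, n)` with `n ≥ j` contribute
`q^{j²}/(1-q^j)` and the pairs `(m, j)` with `m > j` contribute `q^{j²+j}/(1-q^j)`.
-/

def Nat.minFiberEquiv : ℕ × (ℕ ⊕ ℕ) ≃ ℕ × ℕ where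
  toFun
    | (j, .inl k) => (j, j + k)
    | (j, .inr k) => (j + 1 + k, j)
  invFun p := if p.1 ≤ p.2 then (p.1, .inl (p.2 - p.1)) else (p.2, .inr (p.1 - p.2 - 1))
  left_inv := by
    rintro ⟨j, k | k⟩
    · simp
    · simp only [if_neg (by omega : ¬j + 1 + k ≤ j)]
      congr 2
      omega
  right_inv := by
    rintro ⟨m, n⟩
    by_cases h : m ≤ n
    · simp only [if_pos h]
      ext <;> simp only; omega
    · simp only [if_neg h]
      ext <;> simp only; omega

theorem HasSum.prod_fiberwise_min {α : Type*} [AddCommMonoid α] [TopologicalSpace α]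
    [ContinuousAdd α] [RegularSpace α] {f : ℕ × ℕ → α} {a : α} (hf : HasSum f a) {g h : ℕ → α}
    (hg : ∀ j, HasSum (fun k ↦ f (j, j + k)) (g j))
    (hh : ∀ j, HasSum (fun k ↦ f (j + 1 + k, j)) (h j)) :
    HasSum (fun j ↦ g j + h j) a :=
  (Nat.minFiberEquiv.hasSum_iff.2 hf).prod_fiberwise fun j ↦ HasSum.sum (hg j) (hh j)

section NormedField

variable {K : Type*} [NormedField K] {q : K}

theorem hasSum_pow_add_mul (hq : ‖q‖ < 1) (a : ℕ) {b : ℕ} (hb : b ≠ 0) :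
    HasSum (fun k ↦ q ^ (a + b * k)) (q ^ a / (1 - q ^ b)) := by
  have hqb : ‖q ^ b‖ < 1 := by
    rw [norm_pow]
    exact pow_lt_one₀ (norm_nonneg q) hq hb
  simpa only [pow_add, pow_mul, div_eq_mul_inv] using
    (hasSum_geometric_of_norm_lt_one hqb).mul_left (q ^ a)

variable [CompleteSpace K]

theorem summable_pow_succ_mul_succ (hq : ‖q‖ < 1) :
    Summable fun p : ℕ × ℕ ↦ q ^ ((p.1 + 1) * (p.2 + 1)) := by
  have hgeom : Summable fun n : ℕ ↦ ‖q‖ ^ n := summable_geometric_of_lt_one (norm_nonneg q) hq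
  refine .of_norm_bounded
    (hgeom.mul_of_nonneg hgeom (fun n ↦ by positivity) fun n ↦ by positivity) fun p ↦ ?_
  rw [norm_pow, ← pow_add]
  exact pow_le_pow_of_le_one (norm_nonneg q) hq.le (by nlinarith)

theorem hasSum_pow_div_one_sub_pow (hq : ‖q‖ < 1) :
    HasSum (fun j : ℕ ↦ q ^ (j + 1) / (1 - q ^ (j + 1)))
      (∑' p : ℕ × ℕ, q ^ ((p.1 + 1) * (p.2 + 1))) := by
  refine (summable_pow_succ_mul_succ hq).hasSum.prod_fiberwise fun j ↦ ?_
  convert hasSum_pow_add_mul hq (j + 1) j.add_one_ne_zero using 3 with k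
  ring

theorem hasSum_pow_sq_mul_one_add_pow_div_one_sub_pow (hq : ‖q‖ < 1) :
    HasSum (fun j : ℕ ↦ q ^ ((j + 1) ^ 2) * (1 + q ^ (j + 1)) / (1 - q ^ (j + 1)))
      (∑' p : ℕ × ℕ, q ^ ((p.1 + 1) * (p.2 + 1))) := by
  have hlower (j : ℕ) : HasSum (fun k ↦ q ^ ((j + 1) * (j + k + 1)))
      (q ^ ((j + 1) ^ 2) / (1 - q ^ (j + 1))) := by
    convert hasSum_pow_add_mul hq ((j + 1) ^ 2) j.add_one_ne_zero using 3 with k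
    ring
  have hupper (j : ℕ) : HasSum (fun k ↦ q ^ ((j + 1 + k + 1) * (j + 1)))
      (q ^ ((j + 1) ^ 2 + (j + 1)) / (1 - q ^ (j + 1))) := by
    convert hasSum_pow_add_mul hq ((j + 1) ^ 2 + (j + 1)) j.add_one_ne_zero using 3 with k
    ring
  exact ((summable_pow_succ_mul_succ hq).hasSum.prod_fiberwise_min hlower hupper).congr_fun
    fun j ↦ by ring

end NormedField

/-- Lambert series identity: `∑_{j≥1} q^j/(1-q^j) = ∑_{j≥1} q^{j²}(1+q^j)/(1-q^j)` for `|q| < 1`. -/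
theorem lambert_square_identity (q : ℂ) (hq : ‖q‖ < 1) :
    ∑' j : ℕ, q ^ (j + 1) / (1 - q ^ (j + 1)) =
      ∑' j : ℕ, q ^ ((j + 1) ^ 2) * (1 + q ^ (j + 1)) / (1 - q ^ (j + 1)) :=
  (hasSum_pow_div_one_sub_pow hq).tsum_eq.trans
    (hasSum_pow_sq_mul_one_add_pow_div_one_sub_pow hq).tsum_eq.symm
end

section
/- For |q| < 1, we have ∑_{j=1}^∞ q^{2j-1}/(1-q^{2j-1}) = ∑_{j=1}^∞ q^{j(j+1)/2}/(1-q^j). -/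
/-!
Expanding every term as a geometric series turns both sides into double series of powers of `q`:
the left one has the exponents `d * m` with `d` odd, the right one the exponents
`i (i + 1) / 2 + i * l` (`i ≥ 1`, `l ≥ 0`). These are matched bijectively: `d * m` with
`d < 2 m` corresponds to `i = d`, `l = m - (d + 1) / 2`, and with `d > 2 m` to `i = 2 m`,
`l = (d - 1) / 2 - m`. So both sides count the odd divisors of `n` as coefficient of `q ^ n`.
-/

section Lambert

variable {K : Type*} [NormedField K] {q : K}

lemma pow_div_one_sub_pow_eq_tsum (hq : ‖q‖ < 1) (a : ℕ) {b : ℕ} (hb : b ≠ 0) :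
    q ^ a / (1 - q ^ b) = ∑' k : ℕ, q ^ (a + b * k) := by
  have hqb : ‖q ^ b‖ < 1 := by
    rw [norm_pow]
    exact pow_lt_one₀ (norm_nonneg q) hq hb
  simp only [pow_add, pow_mul]
  rw [div_eq_mul_inv, ← tsum_geometric_of_norm_lt_one hqb, tsum_mul_left]

lemma summable_pow_of_add_le [CompleteSpace K] (hq : ‖q‖ < 1) {e : ℕ × ℕ → ℕ}
    (he : ∀ p, p.1 + p.2 ≤ e p) :
    Summable fun p : ℕ × ℕ => q ^ e p := by
  have hgeom : Summable fun n : ℕ => ‖q‖ ^ n := summable_geometric_of_lt_one (norm_nonneg q) hq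
  refine .of_norm_bounded (hgeom.mul_of_nonneg hgeom (fun _ => by positivity)
    (fun _ => by positivity)) fun p => ?_
  rw [norm_pow, ← pow_add]
  exact pow_le_pow_of_le_one (norm_nonneg q) hq.le (he p)

lemma tsum_lambert_eq_tsum_prod [CompleteSpace K] (hq : ‖q‖ < 1) {a b : ℕ → ℕ}
    (ha : ∀ j, j ≤ a j) (hb : ∀ j, 0 < b j) :
    ∑' j, q ^ a j / (1 - q ^ b j) = ∑' p : ℕ × ℕ, q ^ (a p.1 + b p.1 * p.2) := by
  have hsum := summable_pow_of_add_le hq (e := fun p => a p.1 + b p.1 * p.2) fun p =>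
    add_le_add (ha p.1) (Nat.le_mul_of_pos_left _ (hb p.1))
  rw [hsum.tsum_prod]
  exact tsum_congr fun j => pow_div_one_sub_pow_eq_tsum hq _ (hb j).ne'

end Lambert

def oddTriangularEquiv : ℕ × ℕ ≃ ℕ × ℕ where
  toFun p := if p.1 ≤ p.2 then (2 * p.1, p.2 - p.1) else (2 * p.2 + 1, p.1 - p.2 - 1)
  invFun p := if p.1 % 2 = 0 then (p.1 / 2, p.1 / 2 + p.2) else (p.1 / 2 + p.2 + 1, p.1 / 2)
  left_inv := by
    rintro ⟨j, k⟩
    by_cases h : j ≤ k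
    · simp [h]
    · simp [h]; omega
  right_inv := by
    rintro ⟨i, l⟩
    by_cases h : i % 2 = 0 <;> simp [h] <;> omega

lemma triangular_exponent_oddTriangularEquiv (p : ℕ × ℕ) :
    let t := oddTriangularEquiv p
    (t.1 + 1) * (t.1 + 2) / 2 + (t.1 + 1) * t.2 = (2 * p.1 + 1) + (2 * p.1 + 1) * p.2 := by
  obtain ⟨j, k⟩ := p
  simp only [oddTriangularEquiv, Equiv.coe_fn_mk]
  split_ifs with h
  · obtain ⟨t, rfl⟩ := Nat.exists_eq_add_of_le h
    rw [Nat.div_eq_of_eq_mul_left two_pos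
        (by ring : (2 * j + 1) * (2 * j + 2) = (2 * j + 1) * (j + 1) * 2),
      Nat.add_sub_cancel_left]
    ring
  · obtain ⟨t, rfl⟩ := Nat.exists_eq_add_of_lt (not_le.mp h)
    rw [Nat.div_eq_of_eq_mul_left two_pos
        (by ring : (2 * k + 1 + 1) * (2 * k + 1 + 2) = (k + 1) * (2 * k + 3) * 2),
      show k + t + 1 - k - 1 = t by omega]
    ring

/-- `∑_{j≥1} q^{2j-1}/(1-q^{2j-1}) = ∑_{j≥1} q^{j(j+1)/2}/(1-q^j)` for `|q| < 1`. -/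
theorem lambert_odd_triangular_identity (q : ℂ) (hq : ‖q‖ < 1) :
    ∑' j : ℕ, q ^ (2 * j + 1) / (1 - q ^ (2 * j + 1)) =
      ∑' j : ℕ, q ^ ((j + 1) * (j + 2) / 2) / (1 - q ^ (j + 1)) := by
  have htriangular : ∀ j, j ≤ (j + 1) * (j + 2) / 2 := fun j =>
    (Nat.le_div_iff_mul_le two_pos).mpr (by nlinarith)
  rw [tsum_lambert_eq_tsum_prod hq (fun j => by omega) (fun j => by omega),
    tsum_lambert_eq_tsum_prod hq htriangular (fun j => by omega)]
  conv_rhs => rw [← oddTriangularEquiv.tsum_eq]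
  exact tsum_congr fun p => by rw [triangular_exponent_oddTriangularEquiv]
end

section
/- For |q| < 1 with 0 ≤ q, the following identity of double series holds: ∑_{n=2}^∞ q^{2n²}(q^{2n} + q^{4n} + ⋯ + q^{2n²-2n}) = ∑_{n=2}^∞ q^{(2n-1)²}(q^{2n-1} + q^{6n-3} + ⋯ + q^{4n²-8n+3}) + ∑_{n=2}^∞ q^{4n²}(q^{4n} + ⋯ + q^{4n²-4n}). -/
/-!
All three series are rearrangements of the absolutely convergent sum of `q ^ (2 * a * b)` over
the lattice points of the sector `a < b < 2 * a`. The left side enumerates them row by row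
(`a = n`, `b = n + j`), the right side column by column: the first series takes the odd columns
`b = 2 * n - 1` (with `a = n + i - 1`), the second the even ones `b = 2 * n` (with `a = n + i`).
-/

open Finset

namespace DoubleSeriesRearrangement

abbrev Triangle := Σ n : ℕ, {j : ℕ // j ∈ range (n + 1)}

theorem tsum_sum_range_eq_tsum_of_equiv {α β : Type*} [AddCommGroup α] [UniformSpace α]
    [IsUniformAddGroup α] [CompleteSpace α] [T0Space α] {s : Set β} (e : Triangle ≃ s)
    (f : β → α) (g : ℕ → ℕ → α) (hg : ∀ x : Triangle, g x.1 x.2 = f (e x))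
    (hf : Summable fun p : s => f p) :
    ∑' n, ∑ j ∈ range (n + 1), g n j = ∑' p : s, f p := by
  have hg_summable : Summable fun x : Triangle => g x.1 x.2 :=
    ((e.summable_iff (f := fun p : s => f p)).2 hf).congr fun x => (hg x).symm
  calc ∑' n, ∑ j ∈ range (n + 1), g n j
      = ∑' x : Triangle, g x.1 x.2 := by
        rw [hg_summable.tsum_sigma]
        exact tsum_congr fun n => (Finset.tsum_subtype _ (g n)).symm
    _ = ∑' p : s, f p := (tsum_congr hg).trans (e.tsum_eq fun p : s => f p)

theorem summable_pow_two_mul_mul {𝕜 : Type*} [NormedField 𝕜] [CompleteSpace 𝕜] {q : 𝕜}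
    (hq : ‖q‖ < 1) {s : Set (ℕ × ℕ)} (hs : ∀ p ∈ s, 0 < p.1 ∧ 0 < p.2) :
    Summable fun p : s => q ^ (2 * p.1.1 * p.1.2) := by
  have hgeom := summable_geometric_of_lt_one (norm_nonneg q) hq
  have hprod : Summable fun p : ℕ × ℕ => ‖q‖ ^ p.1 * ‖q‖ ^ p.2 :=
    hgeom.mul_of_nonneg hgeom (fun _ => by positivity) (fun _ => by positivity)
  refine (hprod.subtype s).of_norm_bounded fun p => ?_
  obtain ⟨ha, hb⟩ := hs p.1 p.2
  rw [norm_pow, Function.comp_apply, ← pow_add]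
  exact pow_le_pow_of_le_one (norm_nonneg q) hq.le (by nlinarith)

def sector : Set (ℕ × ℕ) := {p | p.1 < p.2 ∧ p.2 < 2 * p.1}

theorem pos_of_mem_sector {p : ℕ × ℕ} (hp : p ∈ sector) : 0 < p.1 ∧ 0 < p.2 := by
  obtain ⟨h₁, h₂⟩ := hp
  omega

theorem sector_eq_odd_union_even :
    sector = {p ∈ sector | Odd p.2} ∪ {p ∈ sector | Even p.2} := by
  ext p
  simp only [Set.mem_union, Set.mem_ofPred_eq, ← and_or_left, (Nat.even_or_odd _).symm, and_true]

theorem disjoint_odd_even :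
    Disjoint {p ∈ sector | Odd p.2} {p ∈ sector | Even p.2} :=
  Set.disjoint_left.2 fun _ hodd heven => Nat.not_even_iff_odd.2 hodd.2 heven.2

def rowEquiv : Triangle ≃ sector where
  toFun x := ⟨(x.1 + 2, x.1 + x.2 + 3), by
    have := mem_range.1 x.2.2; simp only [sector, Set.mem_ofPred_eq]; omega⟩
  invFun p := ⟨p.1.1 - 2, p.1.2 - p.1.1 - 1, by
    have := p.2; simp only [sector, Set.mem_ofPred_eq] at this; rw [mem_range]; omega⟩
  left_inv x := Sigma.subtype_ext (by simp) (by simp; omega)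
  right_inv p := by
    have := p.2; simp only [sector, Set.mem_ofPred_eq] at this
    ext <;> simp <;> omega

def oddColumnEquiv : Triangle ≃ {p ∈ sector | Odd p.2} where
  toFun x := ⟨(x.1 + x.2 + 2, 2 * x.1 + 3), by
    have := mem_range.1 x.2.2; simp only [sector, Set.mem_ofPred_eq, Nat.odd_iff]; omega⟩
  invFun p := ⟨(p.1.2 - 3) / 2, p.1.1 - (p.1.2 - 3) / 2 - 2, by
    have := p.2; simp only [sector, Set.mem_ofPred_eq, Nat.odd_iff] at this
    rw [mem_range]; omega⟩
  left_inv x := Sigma.subtype_ext (by simp) (by simp; omega)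
  right_inv p := by
    have := p.2; simp only [sector, Set.mem_ofPred_eq, Nat.odd_iff] at this
    ext <;> simp <;> omega

def evenColumnEquiv : Triangle ≃ {p ∈ sector | Even p.2} where
  toFun x := ⟨(x.1 + x.2 + 3, 2 * x.1 + 4), by
    have := mem_range.1 x.2.2; simp only [sector, Set.mem_ofPred_eq, Nat.even_iff]; omega⟩
  invFun p := ⟨p.1.2 / 2 - 2, p.1.1 - p.1.2 / 2 - 1, by
    have := p.2; simp only [sector, Set.mem_ofPred_eq, Nat.even_iff] at this
    rw [mem_range]; omega⟩
  left_inv x := Sigma.subtype_ext (by simp; omega) (by simp; omega)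
  right_inv p := by
    have := p.2; simp only [sector, Set.mem_ofPred_eq, Nat.even_iff] at this
    ext <;> simp <;> omega

end DoubleSeriesRearrangement

open DoubleSeriesRearrangement in
theorem double_series_rearrangement_general (q : ℝ) (hq : |q| < 1) :
    ∑' n : ℕ, ∑ j ∈ Finset.range (n + 1), q ^ (2 * (n + 2) ^ 2 + 2 * (n + 2) * (j + 1)) =
      (∑' n : ℕ, ∑ i ∈ Finset.range (n + 1),
          q ^ ((2 * (n + 2) - 1) ^ 2 + (2 * (i + 1) - 1) * (2 * (n + 2) - 1))) +
        ∑' n : ℕ, ∑ i ∈ Finset.range (n + 1),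
          q ^ (4 * (n + 2) ^ 2 + 4 * (n + 2) * (i + 1)) := by
  set w : ℕ × ℕ → ℝ := fun p => q ^ (2 * p.1 * p.2)
  have hw : ∀ s ⊆ sector, Summable fun p : s => w p := fun s hs =>
    summable_pow_two_mul_mul (by rwa [Real.norm_eq_abs]) fun p hp => pos_of_mem_sector (hs hp)
  have hrows := tsum_sum_range_eq_tsum_of_equiv rowEquiv w
    (fun n j => q ^ (2 * (n + 2) ^ 2 + 2 * (n + 2) * (j + 1)))
    (fun x => by dsimp [w, rowEquiv]; congr 1; ring) (hw _ subset_rfl)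
  have hodd := tsum_sum_range_eq_tsum_of_equiv oddColumnEquiv w
    (fun n i => q ^ ((2 * (n + 2) - 1) ^ 2 + (2 * (i + 1) - 1) * (2 * (n + 2) - 1)))
    (fun x => by
      dsimp [w, oddColumnEquiv]
      rw [show 2 * (x.1 + 2) - 1 = 2 * x.1 + 3 by omega,
        show 2 * (x.2.1 + 1) - 1 = 2 * x.2 + 1 by omega]
      congr 1; ring) (hw _ fun _ hp => hp.1)
  have heven := tsum_sum_range_eq_tsum_of_equiv evenColumnEquiv w
    (fun n i => q ^ (4 * (n + 2) ^ 2 + 4 * (n + 2) * (i + 1)))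
    (fun x => by dsimp [w, evenColumnEquiv]; congr 1; ring) (hw _ fun _ hp => hp.1)
  beta_reduce at hrows hodd heven
  have hsplit := Summable.tsum_union_disjoint (f := w) disjoint_odd_even
    (hw _ fun _ hp => hp.1) (hw _ fun _ hp => hp.1)
  rw [← sector_eq_odd_union_even] at hsplit
  rw [hrows, hodd, heven, hsplit]

/-- Identity (2.10) of the paper: for `0 ≤ q` with `|q| < 1`,
`∑_{n≥2} q^{2n²}(q^{2n} + ⋯ + q^{2n²-2n})
  = ∑_{n≥2} q^{(2n-1)²}(q^{2n-1} + q^{6n-3} + ⋯ + q^{4n²-8n+3})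
    + ∑_{n≥2} q^{4n²}(q^{4n} + ⋯ + q^{4n²-4n})`. -/
theorem double_series_rearrangement (q : ℝ) (hq : |q| < 1) (hq0 : 0 ≤ q) :
    ∑' n : ℕ, ∑ j ∈ Finset.range (n + 1), q ^ (2 * (n + 2) ^ 2 + 2 * (n + 2) * (j + 1)) =
      (∑' n : ℕ, ∑ i ∈ Finset.range (n + 1),
          q ^ ((2 * (n + 2) - 1) ^ 2 + (2 * (i + 1) - 1) * (2 * (n + 2) - 1))) +
        ∑' n : ℕ, ∑ i ∈ Finset.range (n + 1),
          q ^ (4 * (n + 2) ^ 2 + 4 * (n + 2) * (i + 1)) :=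
  double_series_rearrangement_general q hq
end

section
/- For positive integers a, b, c with b < c, the power series expansion of (−q;q)_∞/(q;q)_∞ · q^a (1−q^b)(1−q^c) has nonnegative coefficients. -/
open PowerSeries

/-!
Since `(-q;q)_∞ / (q;q)_∞ = ∏_{k ≥ 1} (1 + q^k) / (1 - q^k)` and `b ≠ c`, multiplying by
`(1 - q^b)(1 - q^c)` cancels the denominators of two distinct factors. What remains is a product
of the series `1 + q^k` and `(1 + q^k) / (1 - q^k) = (1 + q^k) ∑_m q^{km}`, all with nonnegative
coefficients, and the factor `q^a` only shifts coefficients.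
-/

/-- The infinite product `∏_{k≥0} f k` of power series whose factors satisfy
`f k ≡ 1 (mod X^(k+1))`, defined coefficientwise via partial products. -/
noncomputable def infProd (f : ℕ → PowerSeries ℚ) : PowerSeries ℚ :=
  PowerSeries.mk fun m => PowerSeries.coeff m (∏ k ∈ Finset.range (m + 1), f k)

/-- `(q;q)_∞`. -/
noncomputable def Pq : PowerSeries ℚ := infProd fun k => 1 - X ^ (k + 1)

/-- `(-q;q)_∞`. -/
noncomputable def Nq : PowerSeries ℚ := infProd fun k => 1 + X ^ (k + 1)

section NonnegCoeffs

variable (R : Type*) [Semiring R] [PartialOrder R] [IsOrderedRing R]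

def nonnegCoeffs : Subsemiring R⟦X⟧ where
  carrier := {f | ∀ n, 0 ≤ coeff n f}
  mul_mem' {f g} hf hg n := by
    rw [coeff_mul]
    exact Finset.sum_nonneg fun p _ => mul_nonneg (hf p.1) (hg p.2)
  one_mem' n := by
    rw [coeff_one]
    split_ifs <;> simp
  add_mem' hf hg n := by
    rw [map_add]
    exact add_nonneg (hf n) (hg n)
  zero_mem' n := by simp

theorem X_mem_nonnegCoeffs : X ∈ nonnegCoeffs R := fun n => by
  rw [coeff_X]
  split_ifs <;> simp

end NonnegCoeffs

theorem inv_one_sub_X_pow_mem_nonnegCoeffs {k : Type*} [Field k] [LinearOrder k]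
    [IsStrictOrderedRing k] {j : ℕ} (hj : 0 < j) : (1 - X ^ j : k⟦X⟧)⁻¹ ∈ nonnegCoeffs k := by
  set g : k⟦X⟧ := (1 - X ^ j)⁻¹
  -- `g = 1 + X^j g` expresses each coefficient of `g` through an earlier one.
  have hg : g = 1 + X ^ j * g := by
    have : g * (1 - X ^ j) = 1 := PowerSeries.inv_mul_cancel _ (by simp [hj.ne'])
    linear_combination this
  intro n
  induction n using Nat.strong_induction_on with
  | _ n ih =>
    rw [hg, map_add, coeff_one, coeff_X_pow_mul']
    split_ifs
    · exact add_nonneg zero_le_one (ih _ (by omega))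
    · simp
    · simpa using ih _ (by omega)
    · simp

theorem PowerSeries.eq_of_forall_X_pow_dvd_sub {R : Type*} [Ring R] {φ ψ : R⟦X⟧}
    (h : ∀ N, X ^ N ∣ φ - ψ) : φ = ψ :=
  sub_eq_zero.1 <| ext fun n => by
    simpa using X_pow_dvd_iff.1 (h (n + 1)) n n.lt_succ_self

def ConvergentFactors (f : ℕ → ℚ⟦X⟧) : Prop := ∀ k, X ^ (k + 1) ∣ f k - 1

namespace ConvergentFactors

variable {f g : ℕ → ℚ⟦X⟧}

theorem constantCoeff_eq_one (hf : ConvergentFactors f) (k : ℕ) : constantCoeff (f k) = 1 := by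
  have : constantCoeff (f k - 1) = 0 := X_dvd_iff.1 ((dvd_pow_self X k.succ_ne_zero).trans (hf k))
  rwa [map_sub, map_one, sub_eq_zero] at this

theorem mul (hf : ConvergentFactors f) (hg : ConvergentFactors g) :
    ConvergentFactors fun k => f k * g k := fun k => by
  have : f k * g k - 1 = (f k - 1) * g k + (g k - 1) := by ring
  rw [this]
  exact dvd_add (dvd_mul_of_dvd_left (hf k) _) (hg k)

theorem inv (hf : ConvergentFactors f) : ConvergentFactors fun k => (f k)⁻¹ := fun k => by
  have hinv : (f k)⁻¹ * f k = 1 :=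
    PowerSeries.inv_mul_cancel _ (by simp [hf.constantCoeff_eq_one k])
  have : (f k)⁻¹ - 1 = -((f k)⁻¹ * (f k - 1)) := by linear_combination hinv
  rw [this, dvd_neg]
  exact dvd_mul_of_dvd_right (hf k) _

theorem ite_mem (hf : ConvergentFactors f) (S : Finset ℕ) :
    ConvergentFactors fun k => if k ∈ S then f k else 1 := fun k => by
  by_cases hk : k ∈ S <;> simp [hk, hf k]

theorem one_sub_X_pow : ConvergentFactors fun k => 1 - X ^ (k + 1) := fun k => by simp

theorem one_add_X_pow : ConvergentFactors fun k => 1 + X ^ (k + 1) := fun k => by simp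

theorem X_pow_dvd_prod_range_sub (hf : ConvergentFactors f) {m N : ℕ} (h : m ≤ N) :
    X ^ m ∣ ∏ k ∈ Finset.range N, f k - ∏ k ∈ Finset.range m, f k := by
  induction N, h using Nat.le_induction with
  | base => simp
  | succ N hN ih =>
    have : ∏ k ∈ Finset.range (N + 1), f k - ∏ k ∈ Finset.range m, f k =
        (∏ k ∈ Finset.range N, f k - ∏ k ∈ Finset.range m, f k) +
          (∏ k ∈ Finset.range N, f k) * (f N - 1) := by
      rw [Finset.prod_range_succ]; ring
    rw [this]
    exact dvd_add ih (dvd_mul_of_dvd_right ((pow_dvd_pow X (by omega)).trans (hf N)) _)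

theorem X_pow_dvd_infProd_sub (hf : ConvergentFactors f) (N : ℕ) :
    X ^ N ∣ infProd f - ∏ k ∈ Finset.range N, f k := by
  refine X_pow_dvd_iff.2 fun m hm => ?_
  have := X_pow_dvd_iff.1 (hf.X_pow_dvd_prod_range_sub (show m + 1 ≤ N by omega)) m m.lt_succ_self
  rw [map_sub] at this ⊢
  rw [infProd, coeff_mk]
  linear_combination -this

theorem infProd_mul (hf : ConvergentFactors f) (hg : ConvergentFactors g) :
    infProd f * infProd g = infProd fun k => f k * g k := by
  refine eq_of_forall_X_pow_dvd_sub fun N => ?_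
  set F := ∏ k ∈ Finset.range N, f k
  set G := ∏ k ∈ Finset.range N, g k
  have hfg := (hf.mul hg).X_pow_dvd_infProd_sub N
  rw [Finset.prod_mul_distrib] at hfg
  have : infProd f * infProd g - infProd (fun k => f k * g k) =
      (infProd f - F) * infProd g + F * (infProd g - G) - (infProd (fun k => f k * g k) - F * G) := by
    ring
  rw [this]
  exact dvd_sub (dvd_add (dvd_mul_of_dvd_left (hf.X_pow_dvd_infProd_sub N) _)
    (dvd_mul_of_dvd_right (hg.X_pow_dvd_infProd_sub N) _)) hfg

theorem infProd_inv (hf : ConvergentFactors f) : (infProd f)⁻¹ = infProd fun k => (f k)⁻¹ := by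
  have hconst : constantCoeff (infProd f) = 1 := by
    rw [← coeff_zero_eq_constantCoeff_apply, infProd, coeff_mk, zero_add, Finset.prod_range_one,
      coeff_zero_eq_constantCoeff_apply, hf.constantCoeff_eq_one 0]
  rw [inv_eq_iff_mul_eq_one (by simp [hconst]), hf.inv.infProd_mul hf]
  refine eq_of_forall_X_pow_dvd_sub fun N => ?_
  have := (hf.inv.mul hf).X_pow_dvd_infProd_sub N
  rwa [Finset.prod_congr rfl fun k _ => PowerSeries.inv_mul_cancel (f k)
    (by simp [hf.constantCoeff_eq_one k]), Finset.prod_const_one] at this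

theorem infProd_ite_mem (hf : ConvergentFactors f) (S : Finset ℕ) :
    infProd (fun k => if k ∈ S then f k else 1) = ∏ k ∈ S, f k := by
  obtain ⟨N₀, hN₀⟩ := S.exists_nat_subset_range
  refine eq_of_forall_X_pow_dvd_sub fun N => ?_
  have hS : S ⊆ Finset.range (max N N₀) := hN₀.trans (Finset.range_subset_range.2 (le_max_right _ _))
  have := (hf.ite_mem S).X_pow_dvd_infProd_sub (max N N₀)
  rw [Finset.prod_ite_mem, Finset.inter_eq_right.2 hS] at this
  exact (pow_dvd_pow X (le_max_left _ _)).trans this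

end ConvergentFactors

theorem infProd_mem_nonnegCoeffs {f : ℕ → ℚ⟦X⟧} (hf : ∀ k, f k ∈ nonnegCoeffs ℚ) :
    infProd f ∈ nonnegCoeffs ℚ := fun n => by
  rw [infProd, coeff_mk]
  exact prod_mem (fun k _ => hf k) n

theorem Pq_inv : Pq⁻¹ = infProd fun k => (1 - X ^ (k + 1))⁻¹ :=
  ConvergentFactors.one_sub_X_pow.infProd_inv

theorem Nq_mul_Pq_inv_mul_prod_mem_nonnegCoeffs (S : Finset ℕ) :
    Nq * Pq⁻¹ * ∏ k ∈ S, (1 - X ^ (k + 1)) ∈ nonnegCoeffs ℚ := by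
  open ConvergentFactors in
  rw [Pq_inv, Nq, one_add_X_pow.infProd_mul one_sub_X_pow.inv, ← one_sub_X_pow.infProd_ite_mem,
    (one_add_X_pow.mul one_sub_X_pow.inv).infProd_mul (one_sub_X_pow.ite_mem S)]
  refine infProd_mem_nonnegCoeffs fun k => ?_
  have h_one_add : (1 + X ^ (k + 1) : ℚ⟦X⟧) ∈ nonnegCoeffs ℚ :=
    add_mem (one_mem _) (pow_mem (X_mem_nonnegCoeffs ℚ) _)
  split_ifs
  · rwa [mul_assoc, PowerSeries.inv_mul_cancel _ (by simp), mul_one]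
  · rw [mul_one]
    exact mul_mem h_one_add (inv_one_sub_X_pow_mem_nonnegCoeffs k.succ_pos)

theorem nonneg_coeff_overpartition_product_general (a b c : ℕ) (hb : 0 < b)
    (hbc : b < c) (n : ℕ) :
    0 ≤ PowerSeries.coeff n (Nq * Pq⁻¹ * (X ^ a * (1 - X ^ b) * (1 - X ^ c))) := by
  have hprod : (1 - X ^ b) * (1 - X ^ c) = ∏ k ∈ {b - 1, c - 1}, (1 - X ^ (k + 1) : ℚ⟦X⟧) := by
    rw [Finset.prod_pair (by omega), Nat.sub_add_cancel hb, Nat.sub_add_cancel (hb.trans hbc)]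
  have hshift : Nq * Pq⁻¹ * (X ^ a * (1 - X ^ b) * (1 - X ^ c)) =
      X ^ a * (Nq * Pq⁻¹ * ∏ k ∈ {b - 1, c - 1}, (1 - X ^ (k + 1))) := by
    rw [← hprod]; ring
  rw [hshift]
  exact mul_mem (pow_mem (X_mem_nonnegCoeffs ℚ) a)
    (Nq_mul_Pq_inv_mul_prod_mem_nonnegCoeffs {b - 1, c - 1}) n

/-- For positive integers `a, b, c` with `b < c`, the power series
`(-q;q)_∞/(q;q)_∞ · q^a (1-q^b)(1-q^c)` has nonnegative coefficients. -/
theorem nonneg_coeff_overpartition_product (a b c : ℕ) (ha : 0 < a) (hb : 0 < b)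
    (hbc : b < c) (n : ℕ) :
    0 ≤ PowerSeries.coeff n (Nq * Pq⁻¹ * (X ^ a * (1 - X ^ b) * (1 - X ^ c))) :=
  nonneg_coeff_overpartition_product_general a b c hb hbc n
end

section
/- For all n ≥ 1, the coefficient of q^n in (−q;q)_∞/(2(q;q)_∞) − 1/2 − ( (−q;q²)_∞/(q;q²)_∞ ) · ( (−q²;q²)_∞/(2(q²;q²)_∞) − 1/2 ) equals the coefficient of q^n in (−q;q²)_∞/(2(q;q²)_∞) − 1/2, and this coefficient is positive. -/
open PowerSeries

/-- `(q;q²)_∞`. -/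
noncomputable def PqOdd : PowerSeries ℚ := infProd fun k => 1 - X ^ (2 * k + 1)

/-- `(-q;q²)_∞`. -/
noncomputable def NqOdd : PowerSeries ℚ := infProd fun k => 1 + X ^ (2 * k + 1)

/-- `(q²;q²)_∞`. -/
noncomputable def PqEven : PowerSeries ℚ := infProd fun k => 1 - X ^ (2 * k + 2)

/-- `(-q²;q²)_∞`. -/
noncomputable def NqEven : PowerSeries ℚ := infProd fun k => 1 + X ^ (2 * k + 2)

/-! The infinite products are identified through their partial products: the factors are
`≡ 1 mod X^(k+1)`, so `infProd f ≡ ∏_{k<N} f k mod X^N`, and `Nq = NqOdd * NqEven`,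
`Pq = PqOdd * PqEven` and Euler's `Nq * Pq = PqEven` (hence `PqOdd⁻¹ = Nq`) are checked on finite
products. The equality then is pure algebra, and the common coefficient is half that of
`NqOdd * Nq`, which is positive because `Nq` counts partitions into distinct parts and
`n = n` is one of them. -/

theorem Finset.prod_range_two_mul {M : Type*} [CommMonoid M] (f : ℕ → M) (N : ℕ) :
    ∏ k ∈ range (2 * N), f k = (∏ k ∈ range N, f (2 * k)) * ∏ k ∈ range N, f (2 * k + 1) := by
  induction N with
  | zero => simp
  | succ N ih =>
    rw [show 2 * (N + 1) = 2 * N + 1 + 1 by ring, prod_range_succ, prod_range_succ, ih,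
      prod_range_succ, prod_range_succ]
    ac_rfl

namespace PowerSeries

variable {R : Type*}

theorem coeff_eq_of_X_pow_dvd_sub [CommRing R] {φ ψ : R⟦X⟧} {m : ℕ}
    (h : X ^ (m + 1) ∣ φ - ψ) : coeff m φ = coeff m ψ := by
  rw [← sub_eq_zero, ← map_sub]
  exact X_pow_dvd_iff.mp h m m.lt_succ_self

theorem eq_of_forall_X_pow_dvd_sub_s9 [CommRing R] {φ ψ : R⟦X⟧} (h : ∀ N, X ^ N ∣ φ - ψ) :
    φ = ψ :=
  ext fun m => coeff_eq_of_X_pow_dvd_sub (h (m + 1))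

theorem X_pow_dvd_prod_range_sub_prod_range [CommRing R] {f : ℕ → R⟦X⟧}
    (hf : ∀ k, X ^ (k + 1) ∣ f k - 1) {M N : ℕ} (h : M ≤ N) :
    X ^ M ∣ ∏ k ∈ Finset.range N, f k - ∏ k ∈ Finset.range M, f k := by
  induction N, h using Nat.le_induction with
  | base => simp
  | succ N hMN ih =>
    have hN : X ^ M ∣ f N - 1 := (pow_dvd_pow X (by omega)).trans (hf N)
    have hsplit : ∏ k ∈ Finset.range (N + 1), f k - ∏ k ∈ Finset.range M, f k =
        (∏ k ∈ Finset.range N, f k) * (f N - 1) +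
          (∏ k ∈ Finset.range N, f k - ∏ k ∈ Finset.range M, f k) := by
      rw [Finset.prod_range_succ]; ring
    rw [hsplit]
    exact dvd_add (hN.mul_left _) ih

theorem X_pow_dvd_one_add_X_pow_sub_one [CommRing R] {k e : ℕ} (h : k ≤ e) :
    X ^ k ∣ (1 + X ^ e : R⟦X⟧) - 1 := by
  rw [add_sub_cancel_left]
  exact pow_dvd_pow X h

theorem X_pow_dvd_one_sub_X_pow_sub_one [CommRing R] {k e : ℕ} (h : k ≤ e) :
    X ^ k ∣ (1 - X ^ e : R⟦X⟧) - 1 := by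
  rw [sub_sub_cancel_left, dvd_neg]
  exact pow_dvd_pow X h

section OrderedCoeffs

variable [CommSemiring R] [PartialOrder R] [IsOrderedRing R]

theorem coeff_mul_nonneg {φ ψ : R⟦X⟧} (hφ : ∀ m, 0 ≤ coeff m φ) (hψ : ∀ m, 0 ≤ coeff m ψ)
    (m : ℕ) : 0 ≤ coeff m (φ * ψ) := by
  rw [coeff_mul]
  exact Finset.sum_nonneg fun p _ => mul_nonneg (hφ p.1) (hψ p.2)

theorem coeff_mul_coeff_le_coeff_mul {φ ψ : R⟦X⟧} (hφ : ∀ m, 0 ≤ coeff m φ)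
    (hψ : ∀ m, 0 ≤ coeff m ψ) (i j : ℕ) : coeff i φ * coeff j ψ ≤ coeff (i + j) (φ * ψ) := by
  rw [coeff_mul]
  exact Finset.single_le_sum (f := fun p : ℕ × ℕ => coeff p.1 φ * coeff p.2 ψ)
    (fun p _ => mul_nonneg (hφ p.1) (hψ p.2)) (a := (i, j))
    (Finset.HasAntidiagonal.mem_antidiagonal.mpr rfl)

theorem coeff_one_add_X_pow_nonneg (e m : ℕ) : 0 ≤ coeff m (1 + X ^ e : R⟦X⟧) := by
  rw [map_add, coeff_one, coeff_X_pow]; split_ifs <;> norm_num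

theorem coeff_prod_one_add_X_pow_nonneg {ι : Type*} (s : Finset ι) (e : ι → ℕ) (m : ℕ) :
    0 ≤ coeff m (∏ i ∈ s, (1 + X ^ e i) : R⟦X⟧) := by
  revert m
  refine Finset.prod_induction _ (fun φ => ∀ m, 0 ≤ coeff m φ)
    (fun _ _ => coeff_mul_nonneg) (fun m => ?_) (fun i _ => coeff_one_add_X_pow_nonneg (e i))
  rw [coeff_one]; split_ifs <;> norm_num

end OrderedCoeffs

end PowerSeries

section InfProd

variable {f g h : ℕ → ℚ⟦X⟧}

theorem coeff_infProd (f : ℕ → ℚ⟦X⟧) (m : ℕ) :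
    coeff m (infProd f) = coeff m (∏ k ∈ Finset.range (m + 1), f k) :=
  coeff_mk _ _

theorem constantCoeff_infProd (f : ℕ → ℚ⟦X⟧) :
    constantCoeff (infProd f) = constantCoeff (f 0) := by
  rw [← coeff_zero_eq_constantCoeff_apply, coeff_infProd, Finset.prod_range_one,
    coeff_zero_eq_constantCoeff_apply]

theorem X_pow_dvd_infProd_sub_prod_range (hf : ∀ k, X ^ (k + 1) ∣ f k - 1) (N : ℕ) :
    X ^ N ∣ infProd f - ∏ k ∈ Finset.range N, f k := by
  refine X_pow_dvd_iff.mpr fun m hm => ?_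
  rw [map_sub, coeff_infProd, sub_eq_zero]
  exact (coeff_eq_of_X_pow_dvd_sub (X_pow_dvd_prod_range_sub_prod_range hf hm)).symm

theorem infProd_eq_mul_of_prod_range (hf : ∀ k, X ^ (k + 1) ∣ f k - 1)
    (hg : ∀ k, X ^ (k + 1) ∣ g k - 1) (hh : ∀ k, X ^ (k + 1) ∣ h k - 1) {e : ℕ → ℕ}
    (he : ∀ N, N ≤ e N)
    (hprod : ∀ N, ∏ k ∈ Finset.range (e N), h k =
      (∏ k ∈ Finset.range N, f k) * ∏ k ∈ Finset.range N, g k) :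
    infProd h = infProd f * infProd g := by
  refine eq_of_forall_X_pow_dvd_sub_s9 fun N => ?_
  have hH := (pow_dvd_pow X (he N)).trans (X_pow_dvd_infProd_sub_prod_range hh (e N))
  have hFG := dvd_mul_sub_mul (X_pow_dvd_infProd_sub_prod_range hf N)
    (X_pow_dvd_infProd_sub_prod_range hg N)
  rw [← hprod] at hFG
  simpa only [sub_sub_sub_cancel_right] using dvd_sub hH hFG

end InfProd

theorem Nq_eq_NqOdd_mul_NqEven : Nq = NqOdd * NqEven :=
  infProd_eq_mul_of_prod_range (fun _ => X_pow_dvd_one_add_X_pow_sub_one (by omega))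
    (fun _ => X_pow_dvd_one_add_X_pow_sub_one (by omega))
    (fun _ => X_pow_dvd_one_add_X_pow_sub_one le_rfl) (e := (2 * ·)) (fun _ => by omega)
    fun N => Finset.prod_range_two_mul _ N

theorem Pq_eq_PqOdd_mul_PqEven : Pq = PqOdd * PqEven :=
  infProd_eq_mul_of_prod_range (fun _ => X_pow_dvd_one_sub_X_pow_sub_one (by omega))
    (fun _ => X_pow_dvd_one_sub_X_pow_sub_one (by omega))
    (fun _ => X_pow_dvd_one_sub_X_pow_sub_one le_rfl) (e := (2 * ·)) (fun _ => by omega)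
    fun N => Finset.prod_range_two_mul _ N

theorem PqEven_eq_Nq_mul_Pq : PqEven = Nq * Pq :=
  infProd_eq_mul_of_prod_range (fun _ => X_pow_dvd_one_add_X_pow_sub_one le_rfl)
    (fun _ => X_pow_dvd_one_sub_X_pow_sub_one le_rfl)
    (fun _ => X_pow_dvd_one_sub_X_pow_sub_one (by omega)) (e := id) (fun _ => le_rfl)
    fun N => by
      rw [id, ← Finset.prod_mul_distrib]
      exact Finset.prod_congr rfl fun k _ => by ring

theorem inv_PqOdd : PqOdd⁻¹ = Nq := by
  have hEven : PqEven ≠ 0 :=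
    ne_zero_of_map (f := constantCoeff) (by simp [PqEven, constantCoeff_infProd])
  refine (inv_eq_iff_mul_eq_one (by simp [PqOdd, constantCoeff_infProd])).mpr ?_
  refine mul_right_cancel₀ hEven ?_
  rw [one_mul, mul_assoc, ← Pq_eq_PqOdd_mul_PqEven, PqEven_eq_Nq_mul_Pq]

theorem coeff_Nq_pos {n : ℕ} (hn : 1 ≤ n) : 0 < coeff n Nq := by
  have hmem : n - 1 ∈ Finset.range (n + 1) := Finset.mem_range.mpr (by omega)
  set Q := ∏ k ∈ (Finset.range (n + 1)).erase (n - 1), (1 + X ^ (k + 1) : ℚ⟦X⟧)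
  have hQ : coeff 0 Q = 1 := by simp [Q, coeff_zero_eq_constantCoeff_apply, map_prod]
  calc (0 : ℚ) < coeff n (1 + X ^ (n - 1 + 1) : ℚ⟦X⟧) * coeff 0 Q := by
        rw [hQ, mul_one, map_add, coeff_one, coeff_X_pow, if_neg (by omega), if_pos (by omega)]
        norm_num
    _ ≤ coeff (n + 0) ((1 + X ^ (n - 1 + 1)) * Q) :=
        coeff_mul_coeff_le_coeff_mul (coeff_one_add_X_pow_nonneg _)
          (coeff_prod_one_add_X_pow_nonneg _ _) n 0
    _ = coeff n Nq := by rw [Nq, coeff_infProd, ← Finset.mul_prod_erase _ _ hmem, add_zero]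

theorem coeff_NqOdd_mul_Nq_pos {n : ℕ} (hn : 1 ≤ n) : 0 < coeff n (NqOdd * Nq) :=
  calc (0 : ℚ) < coeff 0 NqOdd * coeff n Nq := by
        simpa [NqOdd, coeff_zero_eq_constantCoeff_apply, constantCoeff_infProd] using
          coeff_Nq_pos hn
    _ ≤ coeff (0 + n) (NqOdd * Nq) :=
        coeff_mul_coeff_le_coeff_mul
          (fun m => by rw [NqOdd, coeff_infProd]; exact coeff_prod_one_add_X_pow_nonneg _ _ m)
          (fun m => by rw [Nq, coeff_infProd]; exact coeff_prod_one_add_X_pow_nonneg _ _ m) 0 n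
    _ = coeff n (NqOdd * Nq) := by rw [zero_add]

/-- For `n ≥ 1`, the coefficient of `q^n` in
`(-q;q)_∞/(2(q;q)_∞) - 1/2 - ((-q;q²)_∞/(q;q²)_∞)((-q²;q²)_∞/(2(q²;q²)_∞) - 1/2)`
equals that of `(-q;q²)_∞/(2(q;q²)_∞) - 1/2`, and this coefficient is positive. -/
theorem A1_sub_A4_coeff (n : ℕ) (hn : 1 ≤ n) :
    PowerSeries.coeff n
        (C (1 / 2 : ℚ) * Nq * Pq⁻¹ - C (1 / 2 : ℚ) -
          NqOdd * PqOdd⁻¹ * (C (1 / 2 : ℚ) * NqEven * PqEven⁻¹ - C (1 / 2 : ℚ))) =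
      PowerSeries.coeff n (C (1 / 2 : ℚ) * NqOdd * PqOdd⁻¹ - C (1 / 2 : ℚ)) ∧
      0 < PowerSeries.coeff n (C (1 / 2 : ℚ) * NqOdd * PqOdd⁻¹ - C (1 / 2 : ℚ)) := by
  constructor
  · rw [Nq_eq_NqOdd_mul_NqEven, Pq_eq_PqOdd_mul_PqEven, PowerSeries.mul_inv_rev]
    congr 1
    ring
  · have hC : coeff n (C (1 / 2 : ℚ)) = 0 := by rw [coeff_C, if_neg (by omega)]
    rw [inv_PqOdd, map_sub, hC, sub_zero, mul_assoc, coeff_C_mul]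
    exact mul_pos (by norm_num) (coeff_NqOdd_mul_Nq_pos hn)
end

section
/- For a fixed integer k ≥ 1 and |q| < 1, with f_k(q) = ∑_{n=1}^∞ (−1)^{n+1} q^{n(n+1)/2 + n(k−1)}, the identity f_{2k−1}(q) + f_{2k}(q) − 2 f_k(q²) = ∑_{n=1}^∞ [ q^{2n²−5n+4nk−2k+2}(1−q^{2n²−n})(1−q^{4n+2k−2}) − q^{2n²−3n+4nk}(1−q^{2n²+n})(1−q^{4n+2k}) ] holds. -/
/-- `f_k(q) = ∑_{n≥1} (-1)^{n+1} q^{n(n+1)/2 + n(k-1)}`. -/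
noncomputable def fk (k : ℕ) (q : ℂ) : ℂ :=
  ∑' n : ℕ, (-1) ^ n * q ^ ((n + 1) * (n + 2) / 2 + (n + 1) * (k - 1))

/-!
Grouping the terms `n = 2m` and `n = 2m + 1` of `f_{a+1}` gives
`f_{a+1}(q) = ∑_m (q^{(2m+1)(m+a+1)} - q^{(m+1)(2m+2a+3)})`.
Expanding the `m`-th summand of the right-hand side yields eight monomials: six are the `m`-th
grouped terms of `f_{2k-1}(q)`, `f_{2k}(q)` and `-2 f_k(q²)`, and the other two are
`g(m+1) - g(m)` for `g(m) = q^{(2m+1)(m+2k)} - q^{2(2m+1)(m+k)}`, the even-indexed terms of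
`f_{2k}(q) - f_k(q²)`. These telescope to `-g(0) = q^{2k} - q^{2k} = 0`.
-/

lemma summable_pow_of_le {𝕜 : Type*} [NormedDivisionRing 𝕜] [CompleteSpace 𝕜] {q : 𝕜}
    (hq : ‖q‖ < 1) {e : ℕ → ℕ} (he : ∀ n, n ≤ e n) : Summable fun n => q ^ e n :=
  .of_norm_bounded (summable_geometric_of_lt_one (norm_nonneg q) hq) fun n => by
    rw [norm_pow]
    exact pow_le_pow_of_le_one (norm_nonneg q) hq.le (he n)

lemma hasSum_neg_one_pow_mul {R : Type*} [Ring R] [TopologicalSpace R] [IsTopologicalRing R]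
    {g : ℕ → R} {a b : R} (he : HasSum (fun m => g (2 * m)) a)
    (ho : HasSum (fun m => g (2 * m + 1)) b) : HasSum (fun n => (-1) ^ n * g n) (a - b) := by
  rw [sub_eq_add_neg]
  exact HasSum.even_add_odd (f := fun n => (-1) ^ n * g n) (by simpa [pow_mul])
    (by simpa [pow_succ, pow_mul] using ho.neg)

lemma hasSum_succ_sub {G : Type*} [AddCommGroup G] [TopologicalSpace G]
    [IsTopologicalAddGroup G] {g : ℕ → G} {a : G} (hg : HasSum g a) :
    HasSum (fun n => g (n + 1) - g n) (-g 0) := by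
  simpa using ((hasSum_nat_add_iff' 1).2 hg).sub hg

/-- The sum of the terms `n = 2m` and `n = 2m + 1` of `fk (a + 1) q`. -/
def fkPair {R : Type*} [Ring R] (a : ℕ) (q : R) (m : ℕ) : R :=
  q ^ ((2 * m + 1) * (m + a + 1)) - q ^ ((m + 1) * (2 * m + 2 * a + 3))

lemma hasSum_fkPair (a : ℕ) {q : ℂ} (hq : ‖q‖ < 1) : HasSum (fkPair a q) (fk (a + 1) q) := by
  have hEven := summable_pow_of_le hq (e := fun m => (2 * m + 1) * (m + a + 1))
    fun n => by nlinarith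
  have hOdd := summable_pow_of_le hq (e := fun m => (m + 1) * (2 * m + 2 * a + 3))
    fun n => by nlinarith
  have hAlt := hasSum_neg_one_pow_mul
    (g := fun n => q ^ ((n + 1) * (n + 2) / 2 + (n + 1) * a))
    (hEven.hasSum.congr_fun fun m => ?_) (hOdd.hasSum.congr_fun fun m => ?_)
  · rw [fk, Nat.add_sub_cancel, hAlt.tsum_eq]
    exact hEven.hasSum.sub hOdd.hasSum
  · rw [show (2 * m + 1) * (2 * m + 2) = (2 * m + 1) * (m + 1) * 2 by ring,
      Nat.mul_div_cancel _ two_pos]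
    ring
  · rw [show (2 * m + 1 + 1) * (2 * m + 1 + 2) = (m + 1) * (2 * m + 3) * 2 by ring,
      Nat.mul_div_cancel _ two_pos]
    ring

lemma combination_summand_eq {R : Type*} [CommRing R] (q : R) (j m : ℕ) :
    q ^ ((2 * (m + 1) ^ 2 + 4 * (m + 1) * (j + 1) + 2) - (5 * (m + 1) + 2 * (j + 1))) *
        (1 - q ^ (2 * (m + 1) ^ 2 - (m + 1))) * (1 - q ^ (4 * (m + 1) + 2 * (j + 1) - 2)) -
      q ^ ((2 * (m + 1) ^ 2 + 4 * (m + 1) * (j + 1)) - 3 * (m + 1)) *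
        (1 - q ^ (2 * (m + 1) ^ 2 + (m + 1))) * (1 - q ^ (4 * (m + 1) + 2 * (j + 1))) =
      fkPair (2 * j) q m + fkPair (2 * j + 1) q m - 2 * fkPair j (q ^ 2) m +
        ((q ^ ((2 * (m + 1) + 1) * (m + 1 + 2 * j + 2)) -
            (q ^ 2) ^ ((2 * (m + 1) + 1) * (m + 1 + j + 1))) -
          (q ^ ((2 * m + 1) * (m + 2 * j + 2)) - (q ^ 2) ^ ((2 * m + 1) * (m + j + 1)))) := by
  rw [Nat.sub_eq_of_eq_add
      (show _ = (2 * m + 1) * (m + 2 * j + 1) + (5 * (m + 1) + 2 * (j + 1)) by ring),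
    Nat.sub_eq_of_eq_add (show _ = (m + 1) * (2 * m + 1) + (m + 1) by ring),
    Nat.sub_eq_of_eq_add (show _ = 4 * m + 2 * j + 4 + 2 by ring),
    Nat.sub_eq_of_eq_add (show _ = (m + 1) * (2 * m + 4 * j + 3) + 3 * (m + 1) by ring)]
  simp only [fkPair]
  ring

/-- For `k ≥ 1` and `|q| < 1`:
`f_{2k-1}(q) + f_{2k}(q) - 2f_k(q²)
  = ∑_{n≥1} [q^{2n²-5n+4nk-2k+2}(1-q^{2n²-n})(1-q^{4n+2k-2})
             - q^{2n²-3n+4nk}(1-q^{2n²+n})(1-q^{4n+2k})]`. -/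
theorem fk_combination (k : ℕ) (hk : 1 ≤ k) (q : ℂ) (hq : ‖q‖ < 1) :
    fk (2 * k - 1) q + fk (2 * k) q - 2 * fk k (q ^ 2) =
      ∑' m : ℕ,
        (q ^ ((2 * (m + 1) ^ 2 + 4 * (m + 1) * k + 2) - (5 * (m + 1) + 2 * k)) *
            (1 - q ^ (2 * (m + 1) ^ 2 - (m + 1))) * (1 - q ^ (4 * (m + 1) + 2 * k - 2)) -
          q ^ ((2 * (m + 1) ^ 2 + 4 * (m + 1) * k) - 3 * (m + 1)) *
            (1 - q ^ (2 * (m + 1) ^ 2 + (m + 1))) * (1 - q ^ (4 * (m + 1) + 2 * k))) := by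
  obtain ⟨j, rfl⟩ : ∃ j, k = j + 1 := ⟨k - 1, by omega⟩
  have hq2 : ‖q ^ 2‖ < 1 := by
    rw [norm_pow]
    exact pow_lt_one₀ (norm_nonneg q) hq two_ne_zero
  have hEvenTerms : HasSum (fun m => q ^ ((2 * m + 1) * (m + 2 * j + 2)) -
      (q ^ 2) ^ ((2 * m + 1) * (m + j + 1))) _ :=
    (summable_pow_of_le hq fun n => by nlinarith).hasSum.sub
      (summable_pow_of_le hq2 fun n => by nlinarith).hasSum
  have hsum := (((hasSum_fkPair (2 * j) hq).add (hasSum_fkPair (2 * j + 1) hq)).sub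
    ((hasSum_fkPair j hq2).mul_left 2)).add (hasSum_succ_sub hEvenTerms)
  rw [tsum_congr (combination_summand_eq q j), hsum.tsum_eq,
    show 2 * (j + 1) - 1 = 2 * j + 1 by omega, show 2 * (j + 1) = 2 * j + 1 + 1 by ring]
  ring
end
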